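/- arXiv:2203.14075 — 3 statements merged into one kernel-verified Lean document; each statement's English description precedes it below -/
import Mathlib

section
/- Let a, b : ℝ → ℝ be functions that are differentiable at every point of the open interval (−1, 1). Assume that for every t ∈ (−1, 1) and every pair of integers (m, n) ≠ (0, 0) one has m·a′(t) + n·b′(t) ≠ 0. Then the set { t ∈ (−1, 1) : there exist integers (m, n, p) ≠ (0, 0, 0) with m·a(t) + n·b(t) + p = 0 } is countable. -/
/-!
For each of the countably many triples `(m, n, p)` with `(m, n) ≠ (0, 0)`, the function
`m a + n b + p` has nonzero derivative on `(-1, 1)`, so its zeros there are isolated, hence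
countable; triples with `m = n = 0` have no zeros at all.
-/

open Set Filter Topology TopologicalSpace

theorem IsDiscrete.countable {X : Type*} [TopologicalSpace X] [SecondCountableTopology X]
    {s : Set X} (hs : IsDiscrete s) : s.Countable := by
  have := hs.to_subtype
  exact countable_coe_iff.mp (separableSpace_iff_countable.mp inferInstance)

theorem isDiscrete_setOf_eq_of_hasDerivAt_ne_zero {𝕜 F : Type*} [NontriviallyNormedField 𝕜]
    [NormedAddCommGroup F] [NormedSpace 𝕜 F] (f : 𝕜 → F) (c : F) :
    IsDiscrete {x | f x = c ∧ ∃ f', HasDerivAt f f' x ∧ f' ≠ 0} := by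
  refine IsDiscrete.of_nhdsWithin fun x ⟨_, f', hf, hf'⟩ ↦ le_pure_iff.mpr ?_
  have hne : ∀ᶠ z in 𝓝 x, z ≠ x → f z ≠ c :=
    eventually_nhdsWithin_iff.mp (hf.eventually_ne hf')
  filter_upwards [nhdsWithin_le_nhds hne, self_mem_nhdsWithin] with z hz ⟨hzc, _⟩
  exact not_imp_comm.mp hz (not_not.mpr hzc)

theorem countable_setOf_eq_of_hasDerivAt_ne_zero {F : Type*} [NormedAddCommGroup F]
    [NormedSpace ℝ F] (f : ℝ → F) (c : F) :
    {x | f x = c ∧ ∃ f', HasDerivAt f f' x ∧ f' ≠ 0}.Countable :=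
  (isDiscrete_setOf_eq_of_hasDerivAt_ne_zero f c).countable

/-- Abstract core of Lemma 9: if the derivatives `(a'(t), b'(t))` are never rationally
dependent on `(-1,1)`, then the set of `t` where `a(t), b(t), 1` are rationally dependent
is countable. -/
theorem stmt0 (a b : ℝ → ℝ)
    (ha : ∀ t ∈ Ioo (-1 : ℝ) 1, DifferentiableAt ℝ a t)
    (hb : ∀ t ∈ Ioo (-1 : ℝ) 1, DifferentiableAt ℝ b t)
    (h : ∀ t ∈ Ioo (-1 : ℝ) 1, ∀ m n : ℤ, (m, n) ≠ (0, 0) →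
      (m : ℝ) * deriv a t + (n : ℝ) * deriv b t ≠ 0) :
    {t ∈ Ioo (-1 : ℝ) 1 | ∃ m n p : ℤ, (m, n, p) ≠ (0, 0, 0) ∧
      (m : ℝ) * a t + (n : ℝ) * b t + (p : ℝ) = 0}.Countable := by
  let f (q : ℤ × ℤ × ℤ) (t : ℝ) : ℝ := q.1 * a t + q.2.1 * b t + q.2.2
  refine (countable_iUnion fun q ↦ countable_setOf_eq_of_hasDerivAt_ne_zero (f q) 0).mono ?_
  rintro t ⟨ht, m, n, p, hmnp, hzero⟩
  have hmn : (m, n) ≠ (0, 0) := by rintro ⟨⟩; simp_all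
  refine mem_iUnion.mpr ⟨(m, n, p), hzero, _, ?_, h t ht m n hmn⟩
  exact (((ha t ht).hasDerivAt.const_mul _).add ((hb t ht).hasDerivAt.const_mul _)).add_const _
end

section
/- Let s and p be real numbers. Every complex root z of the quadratic polynomial z² − s·z + p has absolute value strictly greater than 1 if and only if |p| > 1 and there exists t ∈ (−1, 1) with s = t·(1 + p). -/
/-!
Over `ℂ` the quadratic splits as `(z - z₁) (z - z₂)` with `z₁ + z₂ = s`, `z₁ z₂ = p`. If the roots
are real, the identity `(1 + p)² - s² = (z₁² - 1) (z₂² - 1)` shows that both lie outside the closed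
unit disk iff `|p| > 1` and `s² < (1 + p)²`. Otherwise they are conjugate, `p = |z₁|²`, and
`s² ≤ 4p ≤ (1 + p)²` with equality only at `p = 1`, so the same criterion holds. Finally, for
`1 + p ≠ 0`, `s² < (1 + p)²` says exactly that `s = t (1 + p)` with `|t| < 1`.
-/

open ComplexConjugate

lemma forall_of_mul_sub_mul_sub_eq_zero_iff {R : Type*} [Ring R] [NoZeroDivisors R]
    (a b : R) (P : R → Prop) :
    (∀ z, (z - a) * (z - b) = 0 → P z) ↔ P a ∧ P b := by
  simp only [mul_eq_zero, sub_eq_zero]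
  exact ⟨fun h => ⟨h a (.inl rfl), h b (.inr rfl)⟩, by rintro ⟨ha, hb⟩ z (rfl | rfl) <;> assumption⟩

lemma one_lt_abs_and_one_lt_abs_iff (a b : ℝ) :
    1 < |a| ∧ 1 < |b| ↔ 1 < |a * b| ∧ (a + b) ^ 2 < (1 + a * b) ^ 2 := by
  have key : (1 + a * b) ^ 2 - (a + b) ^ 2 = (a ^ 2 - 1) * (b ^ 2 - 1) := by ring
  rw [← one_lt_sq_iff_one_lt_abs, ← one_lt_sq_iff_one_lt_abs, ← one_lt_sq_iff_one_lt_abs, mul_pow,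
    ← sub_pos (b := (a + b) ^ 2), key]
  have ha := sq_nonneg a
  have hb := sq_nonneg b
  constructor
  · rintro ⟨ha1, hb1⟩
    exact ⟨by nlinarith, by nlinarith⟩
  · rintro ⟨hab, hpos⟩
    rcases lt_or_ge 1 (a ^ 2) with ha1 | ha1
    · exact ⟨ha1, by nlinarith⟩
    · have hb1 : b ^ 2 < 1 := by nlinarith
      nlinarith [mul_le_mul_of_nonneg_right ha1 hb]

lemma exists_add_eq_and_mul_eq_of_four_mul_le_sq {s p : ℝ} (h : 4 * p ≤ s ^ 2) :
    ∃ a b : ℝ, a + b = s ∧ a * b = p := by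
  have hsqrt := Real.sq_sqrt (sub_nonneg.mpr h)
  exact ⟨(s + √(s ^ 2 - 4 * p)) / 2, (s - √(s ^ 2 - 4 * p)) / 2, by ring,
    by linear_combination (-1 / 4 : ℝ) * hsqrt⟩

lemma exists_two_mul_re_eq_and_normSq_eq_of_sq_le_four_mul {s p : ℝ} (h : s ^ 2 ≤ 4 * p) :
    ∃ w : ℂ, 2 * w.re = s ∧ Complex.normSq w = p := by
  have hsqrt := Real.sq_sqrt (sub_nonneg.mpr h)
  refine ⟨⟨s / 2, √(4 * p - s ^ 2) / 2⟩, by simp only; ring, ?_⟩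
  rw [Complex.normSq_mk]
  linear_combination (1 / 4 : ℝ) * hsqrt

lemma forall_roots_one_lt_norm_iff_of_real_roots (a b : ℝ) :
    (∀ z : ℂ, z ^ 2 - ((a + b : ℝ) : ℂ) * z + ((a * b : ℝ) : ℂ) = 0 → 1 < ‖z‖) ↔
      1 < |a * b| ∧ (a + b) ^ 2 < (1 + a * b) ^ 2 := by
  have hfactor : ∀ z : ℂ,
      z ^ 2 - ((a + b : ℝ) : ℂ) * z + ((a * b : ℝ) : ℂ) = (z - a) * (z - b) := by
    intro z; push_cast; ring
  simp only [hfactor, forall_of_mul_sub_mul_sub_eq_zero_iff, Complex.norm_real, Real.norm_eq_abs]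
  exact one_lt_abs_and_one_lt_abs_iff a b

lemma forall_roots_one_lt_norm_iff_of_conj_roots (w : ℂ) :
    (∀ z : ℂ, z ^ 2 - ((2 * w.re : ℝ) : ℂ) * z + (Complex.normSq w : ℂ) = 0 → 1 < ‖z‖) ↔
      1 < |Complex.normSq w| ∧ (2 * w.re) ^ 2 < (1 + Complex.normSq w) ^ 2 := by
  have hfactor : ∀ z : ℂ,
      z ^ 2 - ((2 * w.re : ℝ) : ℂ) * z + (Complex.normSq w : ℂ) = (z - w) * (z - conj w) := by
    intro z; linear_combination z * Complex.add_conj w - Complex.mul_conj w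
  simp only [hfactor, forall_of_mul_sub_mul_sub_eq_zero_iff, Complex.norm_conj, and_self]
  rw [abs_of_nonneg (Complex.normSq_nonneg w), Complex.normSq_eq_norm_sq, one_lt_sq_iff_one_lt_abs,
    abs_norm, iff_self_and]
  intro hw
  have hre := Complex.re_sq_le_normSq w
  rw [Complex.normSq_eq_norm_sq] at hre
  nlinarith [mul_pos (sub_pos.mpr hw) (sub_pos.mpr hw)]

lemma forall_roots_one_lt_norm_iff (s p : ℝ) :
    (∀ z : ℂ, z ^ 2 - (s : ℂ) * z + (p : ℂ) = 0 → 1 < ‖z‖) ↔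
      1 < |p| ∧ s ^ 2 < (1 + p) ^ 2 := by
  rcases le_total (4 * p) (s ^ 2) with h | h
  · obtain ⟨a, b, rfl, rfl⟩ := exists_add_eq_and_mul_eq_of_four_mul_le_sq h
    exact forall_roots_one_lt_norm_iff_of_real_roots a b
  · obtain ⟨w, rfl, rfl⟩ := exists_two_mul_re_eq_and_normSq_eq_of_sq_le_four_mul h
    exact forall_roots_one_lt_norm_iff_of_conj_roots w

lemma exists_mem_Ioo_eq_mul_iff_sq_lt_sq {s c : ℝ} (hc : c ≠ 0) :
    (∃ t ∈ Set.Ioo (-1 : ℝ) 1, s = t * c) ↔ s ^ 2 < c ^ 2 := by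
  constructor
  · rintro ⟨t, ht, rfl⟩
    have ht2 : t ^ 2 < 1 := by rw [sq_lt_one_iff_abs_lt_one, abs_lt]; exact ht
    rw [mul_pow]
    exact mul_lt_of_lt_one_left (pow_pos (abs_pos.mpr hc) 2 |>.trans_eq (sq_abs c)) ht2
  · intro h
    refine ⟨s / c, ?_, (div_mul_cancel₀ s hc).symm⟩
    rw [Set.mem_Ioo, ← abs_lt, abs_div, div_lt_one (abs_pos.mpr hc)]
    exact sq_lt_sq.mp h

/-- Criterion for both roots of a real quadratic `z² - s z + p` to lie strictly outside the
closed unit disk (used in Lemma 2). -/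
theorem stmt2 (s p : ℝ) :
    (∀ z : ℂ, z ^ 2 - (s : ℂ) * z + (p : ℂ) = 0 → 1 < ‖z‖) ↔
      (1 < |p| ∧ ∃ t ∈ Set.Ioo (-1 : ℝ) 1, s = t * (1 + p)) := by
  rw [forall_roots_one_lt_norm_iff]
  refine and_congr_right fun hp => (exists_mem_Ioo_eq_mul_iff_sq_lt_sq ?_).symm
  intro h
  rw [eq_neg_of_add_eq_zero_right h, abs_neg, abs_one] at hp
  exact lt_irrefl 1 hp
end

section
/- Let ω ∈ (0, π) be such that ω/π is either irrational or equal to p/q for coprime positive integers p, q with q ≥ 4. Then for every η ∈ ℝ there exist infinitely many even natural numbers k with sin(k·ω + η) > 0, and infinitely many even natural numbers k with sin(k·ω + η) < 0. -/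
/-!
Along even `k = 2m` the angles are `kω + η = mθ + η` with `θ = 2ω`, and `sin θ ≠ 0` because the
hypothesis on `ω/π` excludes `ω = π/2`. Reducing `θ` modulo `2π` and reflecting `θ ↦ 2π - θ`, one
may assume `0 < θ < π`. The increasing sequence `mθ + η` then moves in steps shorter than `π`, so it
enters every arc `(2πj, 2πj + π)`, where the sine is positive; shifting `η` by `π` gives the
negative values.
-/

open Real Filter

namespace Real

theorem frequently_sin_nat_mul_add_pos_of_lt_pi {θ : ℝ} (hθ₀ : 0 < θ) (hθπ : θ < π) (η : ℝ) :
    ∃ᶠ m : ℕ in atTop, 0 < sin (m * θ + η) := by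
  rw [frequently_atTop']
  intro N
  obtain ⟨k, hk⟩ := exists_nat_gt ((N * θ + η) / (2 * π))
  set t := (k * (2 * π) - η) / θ
  have hNt : (N : ℝ) ≤ t := by
    rw [le_div_iff₀ hθ₀]
    rw [div_lt_iff₀ (by positivity)] at hk
    linarith
  have hfloor_le : (⌊t⌋₊ : ℝ) ≤ t := Nat.floor_le ((Nat.cast_nonneg N).trans hNt)
  have hlt_floor : t < ⌊t⌋₊ + 1 := Nat.lt_floor_add_one t
  refine ⟨⌊t⌋₊ + 1, Nat.lt_succ_of_le (Nat.le_floor hNt), ?_⟩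
  have hlo : k * (2 * π) < (⌊t⌋₊ + 1 : ℕ) * θ + η := by
    push_cast
    have := (div_lt_iff₀ hθ₀).1 hlt_floor
    linarith
  have hhi : (⌊t⌋₊ + 1 : ℕ) * θ + η ≤ k * (2 * π) + θ := by
    push_cast
    have := (le_div_iff₀ hθ₀).1 hfloor_le
    linarith
  rw [← sin_sub_nat_mul_two_pi _ k]
  exact sin_pos_of_pos_of_lt_pi (by linarith) (by linarith)

theorem frequently_sin_nat_mul_add_pos_of_lt_two_pi {θ : ℝ} (hθ₀ : 0 < θ) (hθ : θ < 2 * π)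
    (hθπ : θ ≠ π) (η : ℝ) : ∃ᶠ m : ℕ in atTop, 0 < sin (m * θ + η) := by
  rcases hθπ.lt_or_gt with hlt | hgt
  · exact frequently_sin_nat_mul_add_pos_of_lt_pi hθ₀ hlt η
  · refine (frequently_sin_nat_mul_add_pos_of_lt_pi (θ := 2 * π - θ) (by linarith) (by linarith)
      (π - η)).mono fun m hm => ?_
    rwa [← sin_pi_sub, ← sin_add_nat_mul_two_pi _ m, show π - (m * θ + η) + m * (2 * π) =
      m * (2 * π - θ) + (π - η) by ring]

theorem frequently_sin_nat_mul_add_pos {θ : ℝ} (hθ : sin θ ≠ 0) (η : ℝ) :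
    ∃ᶠ m : ℕ in atTop, 0 < sin (m * θ + η) := by
  obtain ⟨θ₀, ⟨hθ₀, hθ₀2π⟩, j, hj⟩ : ∃ θ₀ ∈ Set.Ico 0 (2 * π), ∃ j : ℤ, θ = θ₀ + j * (2 * π) :=
    ⟨_, by simpa using toIcoMod_mem_Ico two_pi_pos 0 θ, _,
      by rw [← zsmul_eq_mul, ← self_sub_toIcoMod two_pi_pos 0 θ]; ring⟩
  have hsin (m : ℕ) (x : ℝ) : sin (m * θ + x) = sin (m * θ₀ + x) := by
    rw [← sin_add_int_mul_two_pi (m * θ₀ + x) (m * j), hj]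
    push_cast; ring_nf
  rw [hj, sin_add_int_mul_two_pi] at hθ
  refine (frequently_sin_nat_mul_add_pos_of_lt_two_pi ?_ hθ₀2π ?_ η).mono
    fun m hm => (hsin m η).symm ▸ hm
  · exact hθ₀.lt_of_ne fun h => hθ (by rw [← h, sin_zero])
  · exact fun h => hθ (by rw [h, sin_pi])

theorem frequently_sin_nat_mul_add_neg {θ : ℝ} (hθ : sin θ ≠ 0) (η : ℝ) :
    ∃ᶠ m : ℕ in atTop, sin (m * θ + η) < 0 :=
  (frequently_sin_nat_mul_add_pos hθ (η + π)).mono fun m hm => by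
    rwa [← add_assoc, sin_add_pi, neg_pos] at hm

end Real

theorem ne_half_of_irrational_or_eq_div_of_four_le {x : ℝ}
    (h : Irrational x ∨ ∃ p q : ℕ, 0 < p ∧ 0 < q ∧ Nat.Coprime p q ∧ 4 ≤ q ∧ x = (p : ℝ) / q) :
    x ≠ 1 / 2 := by
  rintro rfl
  rcases h with hirr | ⟨p, q, -, hq, hpq, hq4, hx⟩
  · exact hirr ⟨1 / 2, by norm_num⟩
  · have hqp : q = 2 * p := by
      rw [eq_div_iff (by positivity)] at hx
      exact_mod_cast (by linarith : (q : ℝ) = 2 * p)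
    have hp : p = 1 := hpq.eq_one_of_dvd (hqp ▸ dvd_mul_left p 2)
    omega

theorem sin_two_mul_ne_zero {ω : ℝ} (hω : ω ∈ Set.Ioo 0 π) (hω2 : ω ≠ π / 2) :
    sin (2 * ω) ≠ 0 := by
  have hcos : cos ω ≠ 0 := fun h => hω2 <| injOn_cos (Set.Ioo_subset_Icc_self hω)
    ⟨by positivity, by linarith [pi_pos]⟩ (h.trans cos_pi_div_two.symm)
  rw [sin_two_mul]
  exact mul_ne_zero (mul_ne_zero two_ne_zero (sin_pos_of_pos_of_lt_pi hω.1 hω.2).ne') hcos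

/-- Arithmetic step in the proof of Lemma 7: if `ω/π` is irrational or a rational `p/q` in
lowest terms with `q ≥ 4`, then along even `k` the quantity `sin (kω + η)` attains both
strictly positive and strictly negative values infinitely often. -/
theorem stmt3 (ω : ℝ) (hω : ω ∈ Set.Ioo 0 Real.pi)
    (h : Irrational (ω / Real.pi) ∨
      ∃ p q : ℕ, 0 < p ∧ 0 < q ∧ Nat.Coprime p q ∧ 4 ≤ q ∧ ω / Real.pi = (p : ℝ) / q)
    (η : ℝ) :
    (∀ N : ℕ, ∃ k : ℕ, N < k ∧ Even k ∧ 0 < Real.sin (k * ω + η)) ∧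
    (∀ N : ℕ, ∃ k : ℕ, N < k ∧ Even k ∧ Real.sin (k * ω + η) < 0) := by
  have hω2 : ω ≠ π / 2 := fun h' =>
    ne_half_of_irrational_or_eq_div_of_four_le h (by rw [h']; field_simp [pi_ne_zero])
  have hsin := sin_two_mul_ne_zero hω hω2
  have hdouble : Tendsto (fun m : ℕ => 2 * m) atTop atTop :=
    tendsto_id.const_mul_atTop' two_pos
  have heven (P : ℝ → Prop) (hP : ∃ᶠ m : ℕ in atTop, P (sin (m * (2 * ω) + η))) :
      ∀ N : ℕ, ∃ k : ℕ, N < k ∧ Even k ∧ P (sin (k * ω + η)) := by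
    refine frequently_atTop'.1 (hdouble.frequently (hP.mono fun m hm => ⟨even_two_mul m, ?_⟩))
    push_cast
    rwa [mul_comm (2 : ℝ), mul_assoc]
  exact ⟨heven _ (frequently_sin_nat_mul_add_pos hsin η),
    heven (· < 0) (frequently_sin_nat_mul_add_neg hsin η)⟩
end
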